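/- Let M be a multiline queue and 1 ≤ i ≤ n−1 with e_i^←(M) ≠ M, and let r be the row containing the ball moved by e_i^←. Then L_{e_i^←(M)}(s,c) = L_M(s,c) for all rows s > r and all columns c, and row r of the labeling of e_i^←(M) is obtained from row r of L_M by exchanging the entries in columns i and i+1 (all other entries of row r are unchanged). -/

import Mathlib

open scoped BigOperators

namespace MultilineQueue

/-! ### Basic combinatorial utilities -/

/-- The list of columns `1, …, n`. -/
def colsList (n : ℕ) : List ℕ := (List.range n).map (· + 1)

/-- Insert `x` into a weakly decreasing list, keeping it weakly decreasing. -/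
def insDesc (x : ℕ) : List ℕ → List ℕ
  | [] => [x]
  | y :: ys => if y ≤ x then x :: y :: ys else y :: insDesc x ys

/-- Sort a list of naturals in weakly decreasing order. -/
def sortDesc : List ℕ → List ℕ
  | [] => []
  | x :: xs => insDesc x (sortDesc xs)

/-- The positive parts of a weak composition `α` (supported on columns `1,…,n`). -/
def compParts (n : ℕ) (α : ℕ → ℕ) : List ℕ :=
  ((colsList n).map α).filter (fun x => 0 < x)

/-- `sort(α)`: the partition obtained by sorting the positive parts of `α` decreasingly. -/
def sortComp (n : ℕ) (α : ℕ → ℕ) : List ℕ := sortDesc (compParts n α)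

/-- The conjugate partition: `(conj l).get j = #{i : l i ≥ j+1}`, for `j = 0,…,l₁-1`. -/
def conj (l : List ℕ) : List ℕ :=
  (List.range (l.headD 0)).map (fun j => (l.filter (fun x => j < x)).length)

/-- A list is a partition: weakly decreasing with positive parts. -/
def IsPartitionL (l : List ℕ) : Prop := l.Pairwise (· ≥ ·) ∧ ∀ x ∈ l, 0 < x

/-- Dominance order on partitions: `mu ⊴ lam` (same size, partial sums dominated). -/
def Dominates (lam mu : List ℕ) : Prop :=
  mu.sum = lam.sum ∧ ∀ k, (mu.take k).sum ≤ (lam.take k).sum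

/-- A weak composition with `n` parts: a function `ℕ → ℕ` supported on `{1,…,n}`. -/
def IsWeakComp (n : ℕ) (α : ℕ → ℕ) : Prop := ∀ j, (j = 0 ∨ n < j) → α j = 0

/-- The simple transposition `s_i` acting on a weak composition, exchanging
the entries at positions `i` and `i+1`. -/
def swapComp (i : ℕ) (α : ℕ → ℕ) : ℕ → ℕ :=
  fun j => if j = i then α (i + 1) else if j = i + 1 then α i else α j

/-- A strong composition `τ` (a list), regarded as a weak composition with `n`
parts by appending zeros. -/
def padComp (n : ℕ) (τ : List ℕ) : ℕ → ℕ :=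
  fun j => if 1 ≤ j ∧ j ≤ n then τ.getD (j - 1) 0 else 0

/-! ### Bracket matching between two rows -/

/-- Classical bracket matching between a bottom row `a` (closing letters) and a top
row `b` (opening letters), reading columns `1,…,n` left to right, and within each
column the top letter before the bottom letter.  Returns the tuple
`(stack of unmatched opening positions (head = most recent),
  matched positions of `b`, matched positions of `a`,
  unmatched positions of `a` in left-to-right order)`. -/
def scan (n : ℕ) (a b : Finset ℕ) : List ℕ × Finset ℕ × Finset ℕ × List ℕ :=
  (colsList n).foldl
    (fun st j =>
      let stk : List ℕ := if j ∈ b then j :: st.1 else st.1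
      if j ∈ a then
        match stk with
        | [] => ([], st.2.1, st.2.2.1, st.2.2.2 ++ [j])
        | x :: rest => (rest, insert x st.2.1, insert j st.2.2.1, st.2.2.2)
      else (stk, st.2.1, st.2.2.1, st.2.2.2))
    ([], ∅, ∅, [])

/-- `θ(a⊗b)`: the set of elements of the bottom row `a` classically matched when the
top row `b` is bracketed against it. -/
def theta (n : ℕ) (a b : Finset ℕ) : Finset ℕ := (scan n a b).2.2.1

/-- The set of elements of the top row `b` that are classically matched. -/
def matchedTop (n : ℕ) (a b : Finset ℕ) : Finset ℕ := (scan n a b).2.1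

/-- `R(a,b)`: cylindrical bracket matching; the unmatched opening parentheses wrap
around and match the leftmost unmatched closing parentheses. -/
def Rcyl (n : ℕ) (a b : Finset ℕ) : Finset ℕ :=
  (scan n a b).2.2.1 ∪ ((scan n a b).2.2.2.take (scan n a b).1.length).toFinset

/-- `θ(b₁⊗…⊗b_L)`, extended recursively:
`θ(b₁⊗…⊗b_L) = θ(b₁ ⊗ θ(b₂⊗…⊗b_L))`. -/
def thetaTup (n : ℕ) : List (Finset ℕ) → Finset ℕ
  | [] => ∅
  | [b] => b
  | b :: c :: rest => theta n b (thetaTup n (c :: rest))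

/-- `R(b₁,…,b_L)`, extended recursively: `R(b₁,…,b_L) = R(b₁, R(b₂,…,b_L))`. -/
def Rtup (n : ℕ) : List (Finset ℕ) → Finset ℕ
  | [] => ∅
  | [b] => b
  | b :: c :: rest => Rcyl n b (Rtup n (c :: rest))

/-! ### Multiline queues, the FM labelling, type and major index

A multiline queue (or generalized multiline queue) is recorded as a list of
rows, bottom row first; each row is the set of columns containing a ball. -/

/-- The FM label of the ball of the bottom row of `rows` in column `c`
(`0` if there is no ball there): by the corner transfer matrix description of the
Ferrari–Martin algorithm, the bottom-row balls of label `≥ k` are exactly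
`R(B₁,…,B_k)`, so the label is the largest such `k`. -/
def botLabel (n : ℕ) (rows : List (Finset ℕ)) (c : ℕ) : ℕ :=
  (Finset.range (rows.length + 1)).sup
    (fun k => if c ∈ Rtup n (rows.take k) then k else 0)

/-- `type(M)`: the weak composition of FM labels on the bottom row. -/
def typeOf (n : ℕ) (rows : List (Finset ℕ)) : ℕ → ℕ := botLabel n rows

/-- `L_M(r,c)`: the FM label of the ball at row `r` (1-indexed from the bottom),
column `c`; `0` if the site is empty. The labels of row `r` only depend on
rows `r, r+1, …`, for which `c` sits on the bottom row; a strand of length `h`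
through row `r` truncates to a strand of length `h − (r−1)` there. -/
def labelAt (n : ℕ) (rows : List (Finset ℕ)) (r c : ℕ) : ℕ :=
  if 1 ≤ r ∧ 0 < botLabel n (rows.drop (r - 1)) c then
    botLabel n (rows.drop (r - 1)) c + (r - 1)
  else 0

/-- `strtype(M)`: the strong type, i.e. the type with its zero entries deleted. -/
def strtypeOf (n : ℕ) (rows : List (Finset ℕ)) : List ℕ :=
  ((colsList n).map (typeOf n rows)).filter (fun x => x ≠ 0)

/-- `I_k(M)`: the set of columns whose bottom-row label is exactly `k`. -/
def Iset (n : ℕ) (rows : List (Finset ℕ)) (k : ℕ) : Finset ℕ :=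
  (Finset.Icc 1 n).filter (fun c => typeOf n rows c = k)

/-- The set of balls of row `r` (1-indexed) of `M` having label `≥ ℓ`. -/
def Sset (n : ℕ) (rows : List (Finset ℕ)) (r ℓ : ℕ) : Finset ℕ :=
  if ℓ ≤ rows.length then Rtup n ((rows.drop (r - 1)).take (ℓ + 1 - r)) else ∅

/-- The number of balls of row `r` with label `≥ ℓ` whose FM pairing into row
`r−1` wraps around the cylinder: these are precisely the ones that cannot be
matched classically. -/
def wrapCount (n : ℕ) (rows : List (Finset ℕ)) (r ℓ : ℕ) : ℕ :=
  (Sset n rows r ℓ).card - (theta n (rows.getD (r - 2) ∅) (Sset n rows r ℓ)).card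

/-- `m_{ℓ,r}`: the number of balls labelled exactly `ℓ` in row `r` whose FM pairing
into row `r−1` wraps. -/
def mWrap (n : ℕ) (rows : List (Finset ℕ)) (ℓ r : ℕ) : ℕ :=
  wrapCount n rows r ℓ - wrapCount n rows r (ℓ + 1)

/-- The major index `maj(M) = Σ_{2≤ℓ≤L} Σ_{2≤r≤ℓ} m_{ℓ,r}·(ℓ−r+1)`. -/
def maj (n : ℕ) (rows : List (Finset ℕ)) : ℕ :=
  ∑ ℓ ∈ Finset.Icc 2 rows.length, ∑ r ∈ Finset.Icc 2 ℓ, mWrap n rows ℓ r * (ℓ - r + 1)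

/-- `M` is a multiline queue of shape `(lam, n)`: it has `lam₁` rows, all contained
in `{1,…,n}`, and row `j` has `lam'_j` balls. -/
def IsMLQ (n : ℕ) (lam : List ℕ) (rows : List (Finset ℕ)) : Prop :=
  rows.length = lam.headD 0 ∧ (∀ B ∈ rows, B ⊆ Finset.Icc 1 n) ∧
    ∀ j, j < rows.length → (rows.getD j ∅).card = (lam.filter (fun x => j < x)).length

/-- The unique straight (nonwrapping, vertical-strand) multiline queue of type `α`:
its `j`-th row is `{c : α c ≥ j}`. -/
def straight (n : ℕ) (α : ℕ → ℕ) : List (Finset ℕ) :=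
  (List.range ((sortComp n α).headD 0)).map
    (fun j => (Finset.Icc 1 n).filter (fun c => j + 1 ≤ α c))

/-! ### Row dropping operators and the collapsing map -/

/-- The saturated row dropping operator `e_i^{↓*}` (for `1 ≤ i < rows.length`):
the pair of rows `(B_i, B_{i+1})` is replaced by `(B_i ∪ u, m)`, where `m` and `u`
are the matched, resp. unmatched, elements of `B_{i+1}` against `B_i`. -/
def eStar (n : ℕ) (i : ℕ) (rows : List (Finset ℕ)) : List (Finset ℕ) :=
  if 1 ≤ i ∧ i < rows.length then
    let a := rows.getD (i - 1) ∅
    let b := rows.getD i ∅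
    let m := matchedTop n a b
    (rows.set (i - 1) (a ∪ (b \ m))).set i m
  else rows

/-- `e^{↓*}_{[b,1]} = e^{↓*}_1 ∘ e^{↓*}_2 ∘ ⋯ ∘ e^{↓*}_b` (applying `e^{↓*}_b` first). -/
def eStarSeq (n b : ℕ) (rows : List (Finset ℕ)) : List (Finset ℕ) :=
  (List.range b).foldl (fun r k => eStar n (b - k) r) rows

/-- The collapsing operator
`ρ_N = e^{↓*}_{[L−1,1]} ∘ ⋯ ∘ e^{↓*}_{[2,1]} ∘ e^{↓*}_{[1,1]}`; the resulting
empty rows at the top are discarded, so that the result is an honest nonwrapping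
multiline queue of its own (smaller) shape. -/
def rhoN (n : ℕ) (rows : List (Finset ℕ)) : List (Finset ℕ) :=
  ((List.range (rows.length - 1)).foldl (fun r i => eStarSeq n (i + 1) r) rows).filter
    (fun B => B ≠ ∅)

/-- `π^{(k)}(M)`: the bottom `k` rows of `M`. -/
def trunc (rows : List (Finset ℕ)) (k : ℕ) : List (Finset ℕ) := rows.take k

/-- `ρ^{(k)}(M) = ρ_N(π^{(k)}(M))`. -/
def rhoTrunc (n : ℕ) (rows : List (Finset ℕ)) (k : ℕ) : List (Finset ℕ) :=
  rhoN n (trunc rows k)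

/-- The intermediate stages `M₁ = M, M₂ = e^{↓*}_{[1,1]}(M₁), …, M_L` of the
collapsing procedure. -/
def stages (n : ℕ) (rows : List (Finset ℕ)) : List (List (Finset ℕ)) :=
  (List.range (rows.length - 1)).scanl (fun r i => eStarSeq n (i + 1) r) rows

/-- The recording tableau `ρ_Q(M)`, as a list of rows (bottom row first):
row `j+1` receives `|row_{j+1}(M_{j+1})|` boxes with entry `j+1`, and then, at each
later stage `s+1`, `|row_{j+1}(M_{s+1})| − |row_{j+1}(M_s)|` boxes with entry `s+1`. -/
def rhoQ (n : ℕ) (rows : List (Finset ℕ)) : List (List ℕ) :=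
  let st := stages n rows
  let L := rows.length
  let size : ℕ → ℕ → ℕ := fun j s => ((st.getD s []).getD j ∅).card
  ((List.range L).map (fun j =>
    List.replicate (size j j) (j + 1) ++
      (((List.range L).filter (fun s => j < s)).map
        (fun s => List.replicate (size j s - size j (s - 1)) (s + 1))).flatten)).filter
    (fun row => row ≠ [])

/-! ### Column crystal operators -/

/-- Bracket the letters `i` (closing) against `i+1` (opening) in the row word of
`M` (rows top to bottom, right to left within each row).  Returns
`(stack of list-indices of rows with unmatched balls in column i+1 (head = most recent),
  list-indices of rows with unmatched balls in column i, in word order)`. -/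
def colScan (n : ℕ) (i : ℕ) (rows : List (Finset ℕ)) : List ℕ × List ℕ :=
  ((List.range rows.length).reverse).foldl
    (fun st r =>
      let stk : List ℕ := if i + 1 ∈ rows.getD r ∅ then r :: st.1 else st.1
      if i ∈ rows.getD r ∅ then
        match stk with
        | [] => ([], st.2 ++ [r])
        | _ :: rest => (rest, st.2)
      else (stk, st.2))
    ([], [])

/-- The column raising operator `e_i^←`: moves the ball corresponding to the
leftmost unmatched `i+1` of `θ_i(rw(M))` from column `i+1` to column `i`
(identity if there is none). -/
def eCol (n : ℕ) (i : ℕ) (rows : List (Finset ℕ)) : List (Finset ℕ) :=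
  match (colScan n i rows).1.getLast? with
  | none => rows
  | some r => rows.set r (insert i ((rows.getD r ∅).erase (i + 1)))

/-- The column lowering operator `f_i^→`: moves the ball corresponding to the
rightmost unmatched `i` of `θ_i(rw(M))` from column `i` to column `i+1`
(identity if there is none). -/
def fCol (n : ℕ) (i : ℕ) (rows : List (Finset ℕ)) : List (Finset ℕ) :=
  match (colScan n i rows).2.getLast? with
  | none => rows
  | some r => rows.set r (insert (i + 1) ((rows.getD r ∅).erase i))

/-- The 1-indexed row of the ball moved by `e_i^←`, if any. -/
def movedRowE (n : ℕ) (i : ℕ) (rows : List (Finset ℕ)) : Option ℕ :=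
  ((colScan n i rows).1.getLast?).map (· + 1)

/-- `M` is `e_i^←`-full: `type(M)_i < type(M)_{i+1}` and `θ_i(rw(M))` contains
exactly one unmatched `i+1`. -/
def isEFull (n : ℕ) (i : ℕ) (rows : List (Finset ℕ)) : Prop :=
  typeOf n rows i < typeOf n rows (i + 1) ∧ (colScan n i rows).1.length = 1

/-- `M` is `f_i^→`-full: `f_i^→(M)` is `e_i^←`-full. -/
def isFFull (n : ℕ) (i : ℕ) (rows : List (Finset ℕ)) : Prop :=
  isEFull n i (fCol n i rows)

/-- The bottom row `p` of the `i`-active region `act_i(M)`, given the row `r` of the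
moved ball and its label `ℓ`: the maximal `p ≤ r` with `L_M(p−1,i) = 0` or
`L_M(p−1,i) ≥ ℓ` (noting `L_M(0,i) = 0`, so `p = 1` always qualifies). -/
def actLow (n : ℕ) (rows : List (Finset ℕ)) (i r ℓ : ℕ) : ℕ :=
  ((Finset.Icc 1 r).filter
    (fun p => labelAt n rows (p - 1) i = 0 ∨ ℓ ≤ labelAt n rows (p - 1) i)).sup id

/-! ### FM pairings and strands -/

/-- The first element of `s` weakly to the right of `c`, cyclically. -/
def cycNext (s : Finset ℕ) (c : ℕ) : Option ℕ :=
  if h : (s.filter (fun x => c ≤ x)).Nonempty then some ((s.filter (fun x => c ≤ x)).min' h)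
  else if h2 : s.Nonempty then some (s.min' h2) else none

/-- Stable insertion into a list sorted weakly decreasingly by `key`. -/
def insKey (key : ℕ → ℕ) (x : ℕ) : List ℕ → List ℕ
  | [] => [x]
  | y :: ys => if key y ≤ key x then x :: y :: ys else y :: insKey key x ys

/-- Stable sort, weakly decreasing by `key`. -/
def sortKeyDesc (key : ℕ → ℕ) : List ℕ → List ℕ
  | [] => []
  | x :: xs => insKey key x (sortKeyDesc key xs)

/-- The FM pairings from row `r+1` to row `r` (1-indexed `r ≥ 1`): the balls of row
`r+1` are processed in decreasing order of label (left to right among equal labels),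
each pairing to the first unpaired ball of row `r` weakly to its right, cyclically.
Returns the list of pairs `(source column in row r+1, target column in row r)`. -/
def pairsAt (n : ℕ) (rows : List (Finset ℕ)) (r : ℕ) : List (ℕ × ℕ) :=
  let top := rows.getD r ∅
  let bot := rows.getD (r - 1) ∅
  let order := sortKeyDesc (fun c => labelAt n rows (r + 1) c)
    ((colsList n).filter (fun c => decide (c ∈ top)))
  (order.foldl (fun (st : Finset ℕ × List (ℕ × ℕ)) c =>
      match cycNext st.1 c with
      | some t => (st.1.erase t, st.2 ++ [(c, t)])
      | none => st) (bot, [])).2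

/-- The column of the ball of row `r` to which the ball of row `r+1` in column `c`
is paired by the FM algorithm. -/
def pairedTo (n : ℕ) (rows : List (Finset ℕ)) (r c : ℕ) : Option ℕ :=
  ((pairsAt n rows r).find? (fun p => decide (p.1 = c))).map (·.2)

/-- A strand of `M`: a nonempty sequence of columns `s = [c₁, …, c_h]` with the ball
`c_t` in row `t`, the ball `c_{t+1}` paired to `c_t` for each `t`, and the top ball
`c_h` not paired to from row `h+1`. -/
def IsStrand (n : ℕ) (rows : List (Finset ℕ)) (s : List ℕ) : Prop :=
  s ≠ [] ∧
  (∀ t, t < s.length → s.getD t 0 ∈ rows.getD t ∅) ∧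
  (∀ t, t + 1 < s.length → pairedTo n rows (t + 1) (s.getD (t + 1) 0) = some (s.getD t 0)) ∧
  (∀ c, pairedTo n rows s.length c ≠ some (s.getD (s.length - 1) 0))

/-! ### Semistandard Young tableaux and the charge statistic -/

/-- `Q` is a semistandard Young tableau of shape `sh` and content `ct`, recorded as a
list of rows (bottom row first, French convention), each row a list of entries:
rows weakly increase, columns strictly increase from bottom to top, and for every
`m ≥ 1` the entry `m` occurs `ct_{m}` times. -/
def IsSSYT (Q : List (List ℕ)) (sh ct : List ℕ) : Prop :=
  Q.map List.length = sh ∧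
  (∀ row ∈ Q, row.Pairwise (· ≤ ·)) ∧
  (∀ row ∈ Q, ∀ x ∈ row, 0 < x) ∧
  (∀ j k, j + 1 < Q.length → k < (Q.getD (j + 1) []).length →
      (Q.getD j []).getD k 0 < (Q.getD (j + 1) []).getD k 0) ∧
  (∀ m, 0 < m → ((Q.flatten).filter (fun x => x = m)).length = ct.getD (m - 1) 0)

/-- Find the rightmost occurrence of the value `v` at a position `≤ pos` in the
indexed word `l`; if none, wrap around (cyclically) and take the rightmost
occurrence of `v` overall.  Returns the position together with a flag recording
whether the search wrapped. -/
def chargeFind (l : List (ℕ × ℕ)) (v pos : ℕ) : Option (ℕ × Bool) :=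
  match (l.filter (fun p => decide (p.2 = v ∧ p.1 ≤ pos))).getLast? with
  | some p => some (p.1, false)
  | none =>
    match (l.filter (fun p => decide (p.2 = v))).getLast? with
    | some p => some (p.1, true)
    | none => none

/-- Extract (the rest of) one standard subword, consisting of the letters
`v, v+1, v+2, …`, scanning right to left cyclically from position `pos`; `idx` is
the charge index of the previously extracted letter, incremented whenever the next
letter is found to its right (i.e. when the leftward search wraps around), kept
otherwise.  Returns the total charge contribution of the extracted letters
together with the remaining word. -/
def extractCharge : ℕ → List (ℕ × ℕ) → ℕ → ℕ → ℕ → ℕ × List (ℕ × ℕ)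
  | 0, l, _, _, _ => (0, l)
  | fuel + 1, l, v, pos, idx =>
    match chargeFind l v pos with
    | none => (0, l)
    | some pw =>
      let idx' := if pw.2 then idx + 1 else idx
      let r := extractCharge fuel (l.filter (fun q => decide (q.1 ≠ pw.1))) (v + 1)
        (pw.1 - 1) idx'
      (idx' + r.1, r.2)

/-- The Lascoux–Schützenberger charge of an indexed word: repeatedly extract a
standard subword (starting from the rightmost `1`, whose index is `0`) and add up
the charge contributions. -/
def chargeWordAux : ℕ → List (ℕ × ℕ) → ℕ
  | 0, _ => 0
  | fuel + 1, l =>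
    match chargeFind l 1 l.length with
    | none => 0
    | some pw =>
      let r := extractCharge l.length (l.filter (fun q => decide (q.1 ≠ pw.1))) 2
        (pw.1 - 1) 0
      r.1 + chargeWordAux fuel r.2

/-- The charge of a word. -/
def chargeWord (w : List ℕ) : ℕ := chargeWordAux w.length (w.zipIdx.map Prod.swap)

/-- The charge of a tableau: the charge of its reading word (rows read top to
bottom, left to right within each row). -/
def tabCharge (Q : List (List ℕ)) : ℕ := chargeWord Q.reverse.flatten

/-! ### Polynomials -/

/-- The content monomial `x^M = Π_j Π_{c ∈ B_j} x_c`, with coefficients in `ℤ[q]`. -/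
noncomputable def xM (n : ℕ) (rows : List (Finset ℕ)) :
    MvPolynomial ℕ (Polynomial ℤ) :=
  (rows.map (fun B => ∏ c ∈ B, (MvPolynomial.X c : MvPolynomial ℕ (Polynomial ℤ)))).prod

/-- `q^k` as a coefficient. -/
noncomputable def qpow (k : ℕ) : Polynomial ℤ := Polynomial.X ^ k

/-- The `t = 0` ASEP polynomial `f_α(X;q,0) = Σ_{M ∈ MLQ(α)} q^{maj(M)} x^M`. -/
noncomputable def fASEP (n : ℕ) (α : ℕ → ℕ) : MvPolynomial ℕ (Polynomial ℤ) :=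
  ∑ᶠ (rows : List (Finset ℕ))
    (_ : IsMLQ n (sortComp n α) rows ∧ typeOf n rows = α),
    MvPolynomial.C (qpow (maj n rows)) * xM n rows

/-- The Demazure atom `𝒜_β(X) = Σ_{M ∈ NMLQ(β)} x^M`. -/
noncomputable def atom (n : ℕ) (β : ℕ → ℕ) : MvPolynomial ℕ (Polynomial ℤ) :=
  ∑ᶠ (rows : List (Finset ℕ))
    (_ : IsMLQ n (sortComp n β) rows ∧ maj n rows = 0 ∧ typeOf n rows = β),
    xM n rows

/-- The `t = 0` quasisymmetric Macdonald polynomial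
`G_γ(X;q,0) = Σ_{M ∈ SMLQ(γ)} q^{maj(M)} x^M`. -/
noncomputable def Gqsym (n : ℕ) (γ : List ℕ) : MvPolynomial ℕ (Polynomial ℤ) :=
  ∑ᶠ (rows : List (Finset ℕ))
    (_ : IsMLQ n (sortDesc γ) rows ∧ strtypeOf n rows = γ),
    MvPolynomial.C (qpow (maj n rows)) * xM n rows

/-- The quasisymmetric Schur polynomial `QS_τ(X) = Σ_{M ∈ SNMLQ(τ)} x^M`. -/
noncomputable def QSpoly (n : ℕ) (τ : List ℕ) : MvPolynomial ℕ (Polynomial ℤ) :=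
  ∑ᶠ (rows : List (Finset ℕ))
    (_ : IsMLQ n (sortDesc τ) rows ∧ maj n rows = 0 ∧ strtypeOf n rows = τ),
    xM n rows

/-- The nonsymmetric Kostka–Foulkes polynomial
`K_{α,β}(q) = Σ_Q q^{charge(Q)}`, the sum over the semistandard Young tableaux `Q`
of shape `sort(β)'` and content `sort(α)'` such that `type(ρ^{-1}(M_β, Q)) = α`,
the preimage being expressed via the collapsing bijection `ρ = (ρ_N, ρ_Q)`. -/
noncomputable def Kpoly (n : ℕ) (α β : ℕ → ℕ) : Polynomial ℤ :=
  ∑ᶠ (Q : List (List ℕ))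
    (_ : IsSSYT Q (conj (sortComp n β)) (conj (sortComp n α)) ∧
      ∃ rows : List (Finset ℕ), IsMLQ n (sortComp n α) rows ∧
        rhoN n rows = straight n β ∧ rhoQ n rows = Q ∧ typeOf n rows = α),
    qpow (tabCharge Q)

/-- The quasisymmetric Kostka–Foulkes polynomial
`K_{γ,τ}(q) = Σ_Q q^{charge(Q)}`, the sum over the semistandard Young tableaux `Q`
of shape `sort(τ)'` and content `sort(γ)'` such that `strtype(ρ^{-1}(M_τ, Q)) = γ`. -/
noncomputable def KpolyQ (n : ℕ) (γ τ : List ℕ) : Polynomial ℤ :=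
  ∑ᶠ (Q : List (List ℕ))
    (_ : IsSSYT Q (conj (sortDesc τ)) (conj (sortDesc γ)) ∧
      ∃ rows : List (Finset ℕ), IsMLQ n (sortDesc γ) rows ∧
        rhoN n rows = straight n (padComp n τ) ∧ rhoQ n rows = Q ∧
        strtypeOf n rows = γ),
    qpow (tabCharge Q)


/-! ### Auxiliary development for statement18 -/

section Statement18Aux

/-- Scan state. -/
abbrev ScanSt : Type := List ℕ × Finset ℕ × Finset ℕ × List ℕ

/-- One step of `scan`. -/
def sStep (a b : Finset ℕ) (st : ScanSt) (j : ℕ) : ScanSt :=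
  let stk : List ℕ := if j ∈ b then j :: st.1 else st.1
  if j ∈ a then
    match stk with
    | [] => ([], st.2.1, st.2.2.1, st.2.2.2 ++ [j])
    | x :: rest => (rest, insert x st.2.1, insert j st.2.2.1, st.2.2.2)
  else (stk, st.2.1, st.2.2.1, st.2.2.2)

lemma scan_eq (n : ℕ) (a b : Finset ℕ) :
    scan n a b = (colsList n).foldl (sStep a b) ([], ∅, ∅, []) := rfl

/-- The transposition of `i` and `i+1`. -/
def swf (i : ℕ) : ℕ → ℕ := fun c => if c = i then i + 1 else if c = i + 1 then i else c

lemma swf_i (i : ℕ) : swf i i = i + 1 := by simp [swf]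
lemma swf_i1 (i : ℕ) : swf i (i + 1) = i := by simp [swf]
lemma swf_other (i c : ℕ) (h1 : c ≠ i) (h2 : c ≠ i + 1) : swf i c = c := by
  simp [swf, h1, h2]
lemma swf_invol (i c : ℕ) : swf i (swf i c) = c := by
  unfold swf
  by_cases h1 : c = i
  · simp [h1]
  · by_cases h2 : c = i + 1 <;> simp [h1, h2]

/-- The coupling relation between the two scans (matched-top component ignored). -/
def SRel (i : ℕ) (S S' : ScanSt) : Prop :=
  S'.1 = S.1.map (swf i) ∧ S'.2.2.1 = S.2.2.1.image (swf i) ∧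
    S'.2.2.2 = S.2.2.2.map (swf i)

lemma sRel_step (i : ℕ) (B B' T : Finset ℕ) (S S' : ScanSt) (j : ℕ)
    (hj1 : j ≠ i) (hj2 : j ≠ i + 1) (hBB : j ∈ B ↔ j ∈ B')
    (h : SRel i S S') : SRel i (sStep B T S j) (sStep B' T S' j) := by
  obtain ⟨h1, h2, h3⟩ := h
  have hswj : swf i j = j := swf_other i j hj1 hj2
  unfold sStep
  by_cases hT : j ∈ T <;> by_cases hB : j ∈ B
  · simp only [if_pos hT, if_pos hB, if_pos (hBB.mp hB)]
    refine ⟨?_, ?_, ?_⟩ <;> simp [h1, h2, h3, hswj, Finset.image_insert]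
  · simp only [if_pos hT, if_neg hB, if_neg (fun h => hB (hBB.mpr h))]
    exact ⟨by simp [h1, hswj], h2, h3⟩
  · simp only [if_neg hT, if_pos hB, if_pos (hBB.mp hB)]
    rw [h1]
    cases hS : S.1 with
    | nil => exact ⟨by simp, h2, by simp [h3, hswj]⟩
    | cons x r =>
      refine ⟨by simp, ?_, h3⟩
      simp [h2, hswj, Finset.image_insert]
  · simp only [if_neg hT, if_neg hB, if_neg (fun h => hB (hBB.mpr h))]
    exact ⟨h1, h2, h3⟩

lemma sRel_foldl (i : ℕ) (B B' T : Finset ℕ)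
    (hBB : ∀ j, j ≠ i → j ≠ i + 1 → (j ∈ B ↔ j ∈ B'))
    (cs : List ℕ) (hcs : ∀ j ∈ cs, j ≠ i ∧ j ≠ i + 1) :
    ∀ S S' : ScanSt, SRel i S S' →
      SRel i (cs.foldl (sStep B T) S) (cs.foldl (sStep B' T) S') := by
  induction cs with
  | nil => intro S S' h; exact h
  | cons j cs ih =>
    intro S S' h
    have hj := hcs j (by simp)
    exact ih (fun j hj => hcs j (by simp [hj]))
      _ _ (sRel_step i B B' T S S' j hj.1 hj.2 (hBB j hj.1 hj.2) h)

lemma colsList_split (n i : ℕ) (h1 : 1 ≤ i) (h2 : i < n) :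
    ∃ A C : List ℕ, colsList n = A ++ i :: (i+1) :: C ∧
      (∀ j ∈ A, 1 ≤ j ∧ j < i) ∧ (∀ j ∈ C, i + 2 ≤ j) := by
  refine ⟨(List.range (i-1)).map (· + 1),
    (List.range (n-i-1)).map (fun t => i + 1 + t + 1), ?_, ?_, ?_⟩
  · have hn : n = (i - 1) + 2 + (n - i - 1) := by omega
    rw [colsList, hn, List.range_add, List.range_add]
    have : List.range 2 = [0, 1] := rfl
    simp only [this, List.map_append, List.map_cons, List.map_map, List.map_nil]
    have e1 : i - 1 + 0 + 1 = i := by omega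
    have e2 : i - 1 + 1 + 1 = i + 1 := by omega
    have e3 : ∀ t, i - 1 + 2 + t + 1 = i + 1 + t + 1 := by intro t; omega
    have e4 : i + 1 + (n - i - 1) - i - 1 = n - i - 1 := by omega
    simp [e1, e2, Function.comp, e3, e4]
  · intro j hj
    simp only [List.mem_map, List.mem_range] at hj
    obtain ⟨t, ht, rfl⟩ := hj; omega
  · intro j hj
    simp only [List.mem_map, List.mem_range] at hj
    obtain ⟨t, ht, rfl⟩ := hj; omega

lemma sRel_mid (i : ℕ) (B T : Finset ℕ) (hiB : i ∉ B) (hi1B : i + 1 ∈ B)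
    (hT : i + 1 ∈ T → i ∈ T) (S S' : ScanSt) (h : SRel i S S') :
    SRel i (sStep B T (sStep B T S i) (i+1))
      (sStep (insert i (B.erase (i+1))) T (sStep (insert i (B.erase (i+1))) T S' i) (i+1)) := by
  obtain ⟨e1, e2, e3⟩ := h
  have hiB' : i ∈ insert i (B.erase (i+1)) := Finset.mem_insert_self _ _
  have hi1B' : i + 1 ∉ insert i (B.erase (i+1)) := by
    simp [Finset.mem_insert, Finset.mem_erase]
  by_cases hiT : i ∈ T
  · by_cases hi1T : i + 1 ∈ T
    · -- (T,T)
      simp only [sStep, if_pos hiT, if_neg hiB, if_pos hiB', if_pos hi1T,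
        if_pos hi1B, if_neg hi1B']
      refine ⟨?_, ?_, ?_⟩ <;>
        simp [e1, e2, e3, swf_i, swf_i1, Finset.image_insert]
    · -- (T,F)
      simp only [sStep, if_pos hiT, if_neg hiB, if_pos hiB', if_neg hi1T,
        if_pos hi1B, if_neg hi1B']
      refine ⟨?_, ?_, ?_⟩ <;>
        simp [e1, e2, e3, swf_i, swf_i1, Finset.image_insert]
  · have hi1T : i + 1 ∉ T := fun hh => hiT (hT hh)
    -- (F,F)
    simp only [sStep, if_neg hiT, if_neg hiB, if_pos hiB', if_neg hi1T,
      if_pos hi1B, if_neg hi1B']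
    rw [e1]
    cases hS : S.1 with
    | nil =>
      refine ⟨?_, ?_, ?_⟩ <;> simp [e2, e3, swf_i1]
    | cons x r =>
      refine ⟨?_, ?_, ?_⟩ <;> simp [e2, e3, swf_i1, Finset.image_insert]

lemma sRel_scan (n i : ℕ) (h1 : 1 ≤ i) (h2 : i < n) (B T : Finset ℕ)
    (hiB : i ∉ B) (hi1B : i + 1 ∈ B) (hT : i + 1 ∈ T → i ∈ T) :
    SRel i (scan n B T) (scan n (insert i (B.erase (i+1))) T) := by
  set B' := insert i (B.erase (i+1)) with hB'
  have hBB : ∀ j, j ≠ i → j ≠ i + 1 → (j ∈ B ↔ j ∈ B') := by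
    intro j hj1 hj2
    simp [hB', Finset.mem_insert, Finset.mem_erase, hj1, hj2]
  obtain ⟨A, C, hsplit, hA, hC⟩ := colsList_split n i h1 h2
  rw [scan_eq, scan_eq, hsplit]
  simp only [List.foldl_append, List.foldl_cons]
  have hA' : ∀ j ∈ A, j ≠ i ∧ j ≠ i + 1 := fun j hj => ⟨by have := hA j hj; omega,
    by have := hA j hj; omega⟩
  have hC' : ∀ j ∈ C, j ≠ i ∧ j ≠ i + 1 := fun j hj => ⟨by have := hC j hj; omega,
    by have := hC j hj; omega⟩
  have h0 : SRel i (([], ∅, ∅, []) : ScanSt) (([], ∅, ∅, []) : ScanSt) := by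
    refine ⟨by simp, by simp, by simp⟩
  have hSA := sRel_foldl i B B' T hBB A hA' _ _ h0
  exact sRel_foldl i B B' T hBB C hC' _ _ (sRel_mid i B T hiB hi1B hT _ _ hSA)

lemma mem_image_swf (i c : ℕ) (R : Finset ℕ) :
    c ∈ R.image (swf i) ↔ swf i c ∈ R := by
  rw [Finset.mem_image]
  constructor
  · rintro ⟨a, ha, rfl⟩; rwa [swf_invol]
  · intro h; exact ⟨swf i c, h, swf_invol i c⟩

lemma mem_Rcyl_swap (n i : ℕ) (h1 : 1 ≤ i) (h2 : i < n) (B T : Finset ℕ)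
    (hiB : i ∉ B) (hi1B : i + 1 ∈ B) (hT : i + 1 ∈ T → i ∈ T) (c : ℕ) :
    c ∈ Rcyl n (insert i (B.erase (i+1))) T ↔ swf i c ∈ Rcyl n B T := by
  obtain ⟨e1, e2, e3⟩ := sRel_scan n i h1 h2 B T hiB hi1B hT
  have : Rcyl n (insert i (B.erase (i+1))) T = (Rcyl n B T).image (swf i) := by
    unfold Rcyl
    have hm : ∀ (l : List ℕ), (l.map (swf i)).toFinset = l.toFinset.image (swf i) := by
      intro l; ext x; simp [List.mem_map, eq_comm]
    rw [e1, e2, e3, List.length_map, ← List.map_take, hm, Finset.image_union]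
  rw [this, mem_image_swf]

lemma sStep_mb_mono (a b : Finset ℕ) (S : ScanSt) (j : ℕ) :
    S.2.2.1 ⊆ (sStep a b S j).2.2.1 := by
  unfold sStep
  by_cases hA : j ∈ a
  · simp only [if_pos hA]
    by_cases hB : j ∈ b
    · simp [if_pos hB, Finset.subset_insert]
    · simp only [if_neg hB]
      cases hS : S.1 with
      | nil => simp
      | cons x r => simp [Finset.subset_insert]
  · simp [if_neg hA]

lemma sStep_facts (a b : Finset ℕ) (S : ScanSt) (j : ℕ) :
    (∀ x ∈ (sStep a b S j).2.2.1, x ∈ S.2.2.1 ∨ (x = j ∧ x ∈ a)) ∧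
    ((sStep a b S j).2.2.2 = S.2.2.2 ∨
      ((sStep a b S j).2.2.2 = S.2.2.2 ++ [j] ∧ j ∈ a)) := by
  unfold sStep
  by_cases hA : j ∈ a
  · simp only [if_pos hA]
    by_cases hB : j ∈ b
    · simp only [if_pos hB]
      refine ⟨?_, ?_⟩
      · intro x hx
        rcases Finset.mem_insert.mp hx with h | h
        · exact Or.inr ⟨h, h ▸ hA⟩
        · exact Or.inl h
      · first | exact Or.inl trivial | exact Or.inl rfl
    · simp only [if_neg hB]
      cases hS : S.1 with
      | nil => exact ⟨fun x hx => Or.inl hx, Or.inr ⟨rfl, hA⟩⟩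
      | cons x r =>
        refine ⟨?_, ?_⟩
        · intro y hy
          rcases Finset.mem_insert.mp hy with h | h
          · exact Or.inr ⟨h, h ▸ hA⟩
          · exact Or.inl h
        · first | exact Or.inl trivial | exact Or.inl rfl
  · simp only [if_neg hA]
    exact ⟨fun x hx => Or.inl hx, by first | exact Or.inl trivial | exact Or.inl rfl⟩

lemma foldState (a b : Finset ℕ) (cs : List ℕ) (S : ScanSt) :
    S.2.2.1 ⊆ (cs.foldl (sStep a b) S).2.2.1 ∧
    (∀ x ∈ (cs.foldl (sStep a b) S).2.2.1, x ∈ S.2.2.1 ∨ (x ∈ cs ∧ x ∈ a)) ∧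
    ∃ e, (cs.foldl (sStep a b) S).2.2.2 = S.2.2.2 ++ e ∧ ∀ x ∈ e, x ∈ cs ∧ x ∈ a := by
  induction cs generalizing S with
  | nil => exact ⟨subset_rfl, fun x hx => Or.inl hx, [], by simp, by simp⟩
  | cons j cs ih =>
    obtain ⟨ih1, ih2, e, he, hee⟩ := ih (sStep a b S j)
    obtain ⟨hf1, hf2⟩ := sStep_facts a b S j
    simp only [List.foldl_cons]
    refine ⟨(sStep_mb_mono a b S j).trans ih1, ?_, ?_⟩
    · intro x hx
      rcases ih2 x hx with h | h
      · rcases hf1 x h with h' | h'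
        · exact Or.inl h'
        · exact Or.inr ⟨by simp [h'.1], h'.2⟩
      · exact Or.inr ⟨by simp [h.1], h.2⟩
    · rcases hf2 with h | h
      · exact ⟨e, by rw [he, h], fun x hx => ⟨by simp [(hee x hx).1], (hee x hx).2⟩⟩
      · refine ⟨j :: e, by rw [he, h.1]; simp, ?_⟩
        intro x hx
        rcases List.mem_cons.mp hx with h' | h'
        · exact ⟨by simp [h'], h' ▸ h.2⟩
        · exact ⟨by simp [(hee x h').1], (hee x h').2⟩

lemma Rcyl_subset (n : ℕ) (a b : Finset ℕ) : Rcyl n a b ⊆ a := by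
  obtain ⟨_, h2, e, he, hee⟩ := foldState a b (colsList n) ([], ∅, ∅, [])
  intro x hx
  rcases Finset.mem_union.mp hx with h | h
  · rcases h2 x h with h' | h'
    · simp at h'
    · exact h'.2
  · have hx' : x ∈ (scan n a b).2.2.2 := List.take_subset _ _ (List.mem_toFinset.mp h)
    rw [scan_eq] at hx'
    rw [he] at hx'
    simp only [List.nil_append] at hx'
    exact (hee x hx').2

lemma Rcyl_closure (n i : ℕ) (h1 : 1 ≤ i) (h2 : i < n) (a b : Finset ℕ)
    (ha : i + 1 ∈ a → i ∈ a) (hb : i + 1 ∈ b → i ∈ b) :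
    i + 1 ∈ Rcyl n a b → i ∈ Rcyl n a b := by
  intro hmem
  have hi1a : i + 1 ∈ a := Rcyl_subset n a b hmem
  have hia : i ∈ a := ha hi1a
  obtain ⟨A, C, hsplit, hA, hC⟩ := colsList_split n i h1 h2
  have hscan : scan n a b =
      C.foldl (sStep a b) (sStep a b (sStep a b (A.foldl (sStep a b) ([], ∅, ∅, [])) i) (i+1)) := by
    rw [scan_eq, hsplit]; simp [List.foldl_append]
  set S0 : ScanSt := A.foldl (sStep a b) ([], ∅, ∅, []) with hS0
  obtain ⟨-, hS0mb, e0, hS0un, hS0un'⟩ := foldState a b A (([], ∅, ∅, []) : ScanSt)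
  rw [← hS0] at hS0mb hS0un
  -- whether a pop occurs at column i
  by_cases hpop : (if i ∈ b then i :: S0.1 else S0.1) ≠ []
  · -- i gets matched, hence i ∈ Rcyl
    have hi_mb : i ∈ (sStep a b S0 i).2.2.1 := by
      unfold sStep
      simp only [if_pos hia]
      cases hstk : (if i ∈ b then i :: S0.1 else S0.1) with
      | nil => exact absurd hstk hpop
      | cons x r => simp
    have : i ∈ (scan n a b).2.2.1 := by
      rw [hscan]
      exact (foldState a b C _).1 (sStep_mb_mono a b _ (i+1) hi_mb)
    exact Finset.mem_union_left _ this
  · -- no pop: i ∉ b and the stack is empty; both i and i+1 go to the unmatched list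
    push_neg at hpop
    have hib : i ∉ b := by
      intro h; rw [if_pos h] at hpop; simp at hpop
    have hi1b : i + 1 ∉ b := fun h => hib (hb h)
    have hS0stk : S0.1 = [] := by rwa [if_neg hib] at hpop
    have hstep2 : sStep a b (sStep a b S0 i) (i+1) =
        ([], S0.2.1, S0.2.2.1, (S0.2.2.2 ++ [i]) ++ [i+1]) := by
      unfold sStep
      simp only [if_neg hib, if_neg hi1b, if_pos hia, if_pos hi1a, hS0stk]
      try rfl
    rw [hstep2] at hscan
    obtain ⟨-, hCmb, e, hCun, hCun'⟩ :=
      foldState a b C (([], S0.2.1, S0.2.2.1, (S0.2.2.2 ++ [i]) ++ [i+1]) : ScanSt)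
    rw [← hscan] at hCmb hCun
    -- i+1 is not in the matched set
    have hi1mb : i + 1 ∉ (scan n a b).2.2.1 := by
      intro h
      rcases hCmb _ h with h' | h'
      · rcases hS0mb _ h' with h'' | h''
        · simp at h''
        · have := hA _ h''.1; omega
      · have := hC _ h'.1; omega
    -- hence i+1 is among the wrapped unmatched ones
    have hi1take : i + 1 ∈ (scan n a b).2.2.2.take (scan n a b).1.length := by
      rcases Finset.mem_union.mp hmem with h | h
      · exact absurd h hi1mb
      · exact List.mem_toFinset.mp h
    set L := (scan n a b).1.length
    set u0 := S0.2.2.2 with hu0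
    have hunf : (scan n a b).2.2.2 = (u0 ++ [i]) ++ ([i+1] ++ e) := by
      rw [hCun]; simp
    have hu0small : ∀ x ∈ u0, x < i := by
      intro x hx
      rw [hS0un] at hx
      simp only [List.nil_append] at hx
      have := hA _ (hS0un' x hx).1; omega
    have htakeL : u0.length + 2 ≤ L := by
      by_contra hL
      push_neg at hL
      have hsub : (scan n a b).2.2.2.take L ⊆ (scan n a b).2.2.2.take (u0.length + 1) := by
        intro x hx
        have : (scan n a b).2.2.2.take L = ((scan n a b).2.2.2.take (u0.length + 1)).take L := by
          rw [List.take_take, min_eq_left (by omega)]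
        rw [this] at hx
        exact List.take_subset _ _ hx
      have : i + 1 ∈ (scan n a b).2.2.2.take (u0.length + 1) := hsub hi1take
      rw [hunf] at this
      have heq : ((u0 ++ [i]) ++ ([i+1] ++ e)).take (u0.length + 1) = u0 ++ [i] := by
        have : u0.length + 1 = (u0 ++ [i]).length := by simp
        rw [this, List.take_left]
      rw [heq] at this
      rcases List.mem_append.mp this with h | h
      · have := hu0small _ h; omega
      · simp at h
    have hitake : i ∈ (scan n a b).2.2.2.take L := by
      have heq : ((u0 ++ [i]) ++ ([i+1] ++ e)).take (u0.length + 1) = u0 ++ [i] := by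
        have : u0.length + 1 = (u0 ++ [i]).length := by simp
        rw [this, List.take_left]
      have hsub : (scan n a b).2.2.2.take (u0.length + 1) ⊆ (scan n a b).2.2.2.take L := by
        intro x hx
        have : (scan n a b).2.2.2.take (u0.length + 1) = ((scan n a b).2.2.2.take L).take (u0.length + 1) := by
          rw [List.take_take, min_eq_left (by omega)]
        rw [this] at hx
        exact List.take_subset _ _ hx
      apply hsub
      rw [hunf, heq]
      simp
    exact Finset.mem_union_right _ (List.mem_toFinset.mpr hitake)

/-- One step of `colScan`. -/
def cStep (i : ℕ) (rows : List (Finset ℕ)) (st : List ℕ × List ℕ) (r : ℕ) :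
    List ℕ × List ℕ :=
  let stk : List ℕ := if i + 1 ∈ rows.getD r ∅ then r :: st.1 else st.1
  if i ∈ rows.getD r ∅ then
    match stk with
    | [] => ([], st.2 ++ [r])
    | _ :: rest => (rest, st.2)
  else (stk, st.2)

lemma colScan_eq (n i : ℕ) (rows : List (Finset ℕ)) :
    colScan n i rows = ((List.range rows.length).reverse).foldl (cStep i rows) ([], []) := rfl

/-- Bottom-up recursive form of `colScan`. -/
def auxCS (i : ℕ) : List (Finset ℕ) → List ℕ × List ℕ
  | [] => ([], [])
  | b :: rest =>
    let s := auxCS i rest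
    let stk : List ℕ := if i + 1 ∈ b then 0 :: s.1.map (· + 1) else s.1.map (· + 1)
    if i ∈ b then
      match stk with
      | [] => ([], s.2.map (· + 1) ++ [0])
      | _ :: r => (r, s.2.map (· + 1))
    else (stk, s.2.map (· + 1))

lemma map_succ_tail (l : List ℕ) : (l.map (· + 1)).tail = l.tail.map (· + 1) := by
  cases l <;> rfl

lemma getLast?_map_succ (l : List ℕ) :
    (l.map (· + 1)).getLast? = l.getLast?.map (· + 1) := by
  induction l with
  | nil => rfl
  | cons a t ih =>
    cases t with
    | nil => rfl
    | cons b t' =>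
      simp only [List.map_cons] at *
      rw [List.getLast?_cons_cons, List.getLast?_cons_cons]
      exact ih

lemma cStep_shift (i : ℕ) (b : Finset ℕ) (rest : List (Finset ℕ)) (l : List ℕ) :
    ∀ S : List ℕ × List ℕ,
      l.foldl (fun st r => cStep i (b :: rest) st (r + 1)) (S.1.map (· + 1), S.2.map (· + 1)) =
        ((l.foldl (cStep i rest) S).1.map (· + 1), (l.foldl (cStep i rest) S).2.map (· + 1)) := by
  induction l with
  | nil => intro S; rfl
  | cons r l ih =>
    intro S
    simp only [List.foldl_cons]
    have hstep : cStep i (b :: rest) (S.1.map (· + 1), S.2.map (· + 1)) (r + 1) =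
        ((cStep i rest S r).1.map (· + 1), (cStep i rest S r).2.map (· + 1)) := by
      unfold cStep
      have hget : (b :: rest).getD (r + 1) ∅ = rest.getD r ∅ := by simp
      rw [hget]
      by_cases h1 : i + 1 ∈ rest.getD r ∅ <;> by_cases h2 : i ∈ rest.getD r ∅ <;>
        simp only [h1, h2, if_true, if_false] <;>
        first
          | rfl
          | (cases hS : S.1 with
              | nil => simp
              | cons x xs => simp)
    rw [hstep]
    exact ih (cStep i rest S r)

lemma colScan_eq_auxCS (n i : ℕ) (rows : List (Finset ℕ)) :
    colScan n i rows = auxCS i rows := by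
  induction rows with
  | nil => rfl
  | cons b rest ih =>
    rw [colScan_eq]
    have hr : List.range (b :: rest).length = 0 :: (List.range rest.length).map (· + 1) := by
      simp only [List.length_cons, List.range_succ_eq_map]
      try rfl
    rw [hr, List.reverse_cons, List.foldl_append, ← List.map_reverse, List.foldl_map]
    have hsh := cStep_shift i b rest (List.range rest.length).reverse ([], [])
    simp only [List.map_nil] at hsh
    rw [hsh, ← colScan_eq n i rest, ih]
    show cStep i (b :: rest) ((auxCS i rest).1.map (· + 1), (auxCS i rest).2.map (· + 1)) 0 =
      auxCS i (b :: rest)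
    conv_rhs => rw [auxCS]
    unfold cStep
    simp only [List.getD_cons_zero]
    try rfl

lemma auxCS_stack (i : ℕ) (b : Finset ℕ) (rest : List (Finset ℕ)) :
    (auxCS i (b :: rest)).1 =
      if i ∈ b then
        (if i + 1 ∈ b then (auxCS i rest).1.map (· + 1)
          else ((auxCS i rest).1.map (· + 1)).tail)
      else (if i + 1 ∈ b then 0 :: (auxCS i rest).1.map (· + 1)
        else (auxCS i rest).1.map (· + 1)) := by
  conv_lhs => rw [auxCS]
  by_cases h1 : i + 1 ∈ b <;> by_cases h2 : i ∈ b <;>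
    simp only [h1, h2, if_true, if_false] <;>
    first
      | rfl
      | (cases hS : (auxCS i rest).1 with
          | nil => rfl
          | cons x xs => rfl)

lemma auxCS_len (i : ℕ) (b : Finset ℕ) (rest : List (Finset ℕ)) :
    (auxCS i (b :: rest)).1.length =
      (if i ∈ b then
        (if i + 1 ∈ b then (auxCS i rest).1.length + 1 else (auxCS i rest).1.length) - 1
       else
        (if i + 1 ∈ b then (auxCS i rest).1.length + 1 else (auxCS i rest).1.length)) := by
  rw [auxCS_stack]
  by_cases h1 : i + 1 ∈ b <;> by_cases h2 : i ∈ b <;>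
    simp [h1, h2, List.length_tail]

lemma auxCS_take_len (i : ℕ) (l : List (Finset ℕ)) (m : ℕ) :
    (auxCS i (l.take m)).1.length ≤ (auxCS i l).1.length := by
  induction l generalizing m with
  | nil => simp
  | cons b rest ih =>
    cases m with
    | zero => simp [auxCS]
    | succ m =>
      rw [List.take_succ_cons, auxCS_len, auxCS_len]
      have := ih m
      by_cases h1 : i + 1 ∈ b <;> by_cases h2 : i ∈ b <;> simp [h1, h2] <;> omega

lemma Rtup_closure (n i : ℕ) (h1 : 1 ≤ i) (h2 : i < n) (l : List (Finset ℕ))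
    (hstk : (auxCS i l).1 = []) : i + 1 ∈ Rtup n l → i ∈ Rtup n l := by
  induction l with
  | nil => simp [Rtup]
  | cons b rest ih =>
    cases rest with
    | nil =>
      intro hmem
      have hstk' := hstk
      rw [auxCS_stack] at hstk'
      by_cases hib : i ∈ b
      · exact hib
      · exfalso
        by_cases hi1b : i + 1 ∈ b
        · simp [hib, hi1b, auxCS] at hstk'
        · exact hi1b hmem
    | cons c rest' =>
      have hlen : (auxCS i (b :: c :: rest')).1.length = 0 := by rw [hstk]; rfl
      rw [auxCS_len] at hlen
      show i + 1 ∈ Rcyl n b (Rtup n (c :: rest')) → i ∈ Rcyl n b (Rtup n (c :: rest'))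
      by_cases hib : i ∈ b <;> by_cases hi1b : i + 1 ∈ b
      · simp only [hib, hi1b, if_true] at hlen
        have hs : (auxCS i (c :: rest')).1 = [] :=
          List.length_eq_zero_iff.mp (by omega)
        exact Rcyl_closure n i h1 h2 b _ (fun _ => hib) (ih hs)
      · intro hmem
        exact absurd (Rcyl_subset n b _ hmem) hi1b
      · exfalso
        simp only [hib, hi1b, if_true, if_false] at hlen
        omega
      · simp only [hib, hi1b, if_false] at hlen
        have hs : (auxCS i (c :: rest')).1 = [] := List.length_eq_zero_iff.mp hlen
        exact Rcyl_closure n i h1 h2 b _ (fun h => absurd h hi1b) (ih hs)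

lemma getLast?_of_tail {α : Type*} (l : List α) (x : α)
    (h : l.tail.getLast? = some x) : l.getLast? = some x := by
  cases l with
  | nil => simp at h
  | cons a t =>
    cases t with
    | nil => simp at h
    | cons b t' => rw [List.getLast?_cons_cons]; exact h

lemma getLast?_zero_cons_map (l : List ℕ) (k : ℕ)
    (h : (0 :: l.map (· + 1)).getLast? = some (k + 1)) : l.getLast? = some k := by
  cases l with
  | nil => simp at h
  | cons x xs =>
    rw [List.map_cons, List.getLast?_cons_cons,
      show ((x + 1) :: xs.map (· + 1) : List ℕ) = (x :: xs).map (· + 1) from rfl,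
      getLast?_map_succ] at h
    rcases Option.map_eq_some_iff.mp h with ⟨y, hy1, hy2⟩
    rwa [show k = y by omega]

lemma auxCS_getLast (i : ℕ) (M : List (Finset ℕ)) (rr : ℕ)
    (h : (auxCS i M).1.getLast? = some rr) :
    rr < M.length ∧ i + 1 ∈ M.getD rr ∅ ∧ i ∉ M.getD rr ∅ ∧
      (auxCS i (M.drop (rr + 1))).1 = [] := by
  induction M generalizing rr with
  | nil => simp [auxCS] at h
  | cons b rest ih =>
    rw [auxCS_stack] at h
    cases rr with
    | zero =>
      by_cases hib : i ∈ b <;> by_cases hi1b : i + 1 ∈ b <;>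
        simp only [hib, hi1b, if_true, if_false] at h
      · rw [getLast?_map_succ] at h
        rcases Option.map_eq_some_iff.mp h with ⟨y, _, hy⟩; omega
      · rw [map_succ_tail, getLast?_map_succ] at h
        rcases Option.map_eq_some_iff.mp h with ⟨y, _, hy⟩; omega
      · cases hS : (auxCS i rest).1 with
        | nil =>
          refine ⟨by simp, hi1b, hib, ?_⟩
          simpa using hS
        | cons x xs =>
          exfalso
          rw [hS, List.map_cons, List.getLast?_cons_cons] at h
          rw [show ((x + 1) :: xs.map (· + 1) : List ℕ) = (x :: xs).map (· + 1) from rfl,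
            getLast?_map_succ] at h
          rcases Option.map_eq_some_iff.mp h with ⟨y, _, hy⟩
          omega
      · rw [getLast?_map_succ] at h
        rcases Option.map_eq_some_iff.mp h with ⟨y, _, hy⟩; omega
    | succ rr' =>
      have hrest : (auxCS i rest).1.getLast? = some rr' := by
        by_cases hib : i ∈ b <;> by_cases hi1b : i + 1 ∈ b <;>
          simp only [hib, hi1b, if_true, if_false] at h
        · rw [getLast?_map_succ] at h
          rcases Option.map_eq_some_iff.mp h with ⟨y, hy1, hy2⟩
          rwa [show y = rr' by omega] at hy1
        · rw [map_succ_tail, getLast?_map_succ] at h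
          rcases Option.map_eq_some_iff.mp h with ⟨y, hy1, hy2⟩
          have h2 := getLast?_of_tail _ _ hy1
          rwa [show y = rr' by omega] at h2
        · exact getLast?_zero_cons_map _ _ h
        · rw [getLast?_map_succ] at h
          rcases Option.map_eq_some_iff.mp h with ⟨y, hy1, hy2⟩
          rwa [show y = rr' by omega] at hy1
      obtain ⟨g1, g2, g3, g4⟩ := ih rr' hrest
      exact ⟨by simpa using Nat.succ_lt_succ g1, by simpa using g2, by simpa using g3,
        by simpa using g4⟩


lemma drop_set_of_lt (l : List (Finset ℕ)) (k m : ℕ) (x : Finset ℕ) (h : k < m) :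
    (l.set k x).drop m = l.drop m := by
  apply List.ext_getElem?
  intro j
  rw [List.getElem?_drop, List.getElem?_drop, List.getElem?_set_ne (by omega)]

lemma drop_set_self (l : List (Finset ℕ)) (k : ℕ) (x : Finset ℕ) (h : k < l.length) :
    (l.set k x).drop k = x :: l.drop (k + 1) := by
  rw [List.drop_eq_getElem_cons (by simpa using h)]
  rw [List.getElem_set_self]
  congr 1
  exact drop_set_of_lt l k (k + 1) x (by omega)

lemma Rtup_take_swap (n i : ℕ) (h1 : 1 ≤ i) (h2 : i < n) (B : Finset ℕ)
    (U : List (Finset ℕ)) (hiB : i ∉ B) (hi1B : i + 1 ∈ B)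
    (hU : (auxCS i U).1 = []) (k : ℕ) (c : ℕ) :
    c ∈ Rtup n ((insert i (B.erase (i + 1)) :: U).take k) ↔
      swf i c ∈ Rtup n ((B :: U).take k) := by
  cases k with
  | zero => simp [Rtup]
  | succ k =>
    rw [List.take_succ_cons, List.take_succ_cons]
    cases hUk : U.take k with
    | nil =>
      show c ∈ (insert i (B.erase (i + 1)) : Finset ℕ) ↔ swf i c ∈ B
      by_cases hc1 : c = i
      · subst hc1
        simp [swf_i, hi1B]
      · by_cases hc2 : c = i + 1
        · subst hc2
          simp [swf_i1, hiB, Finset.mem_insert, Finset.mem_erase]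
        · rw [swf_other i c hc1 hc2]
          simp [Finset.mem_insert, Finset.mem_erase, hc1, hc2]
    | cons u us =>
      have hUt : (auxCS i (U.take k)).1 = [] := by
        have hle := auxCS_take_len i U k
        rw [hU] at hle
        simp only [List.length_nil, Nat.le_zero] at hle
        exact List.length_eq_zero_iff.mp hle
      rw [hUk] at hUt
      have hcl : i + 1 ∈ Rtup n (u :: us) → i ∈ Rtup n (u :: us) :=
        Rtup_closure n i h1 h2 _ hUt
      show c ∈ Rcyl n (insert i (B.erase (i + 1))) (Rtup n (u :: us)) ↔
        swf i c ∈ Rcyl n B (Rtup n (u :: us))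
      exact mem_Rcyl_swap n i h1 h2 B _ hiB hi1B hcl c

lemma botLabel_swap (n i : ℕ) (h1 : 1 ≤ i) (h2 : i < n) (B : Finset ℕ)
    (U : List (Finset ℕ)) (hiB : i ∉ B) (hi1B : i + 1 ∈ B)
    (hU : (auxCS i U).1 = []) (c : ℕ) :
    botLabel n (insert i (B.erase (i + 1)) :: U) c = botLabel n (B :: U) (swf i c) := by
  unfold botLabel
  simp only [List.length_cons]
  refine Finset.sup_congr rfl ?_
  intro k _
  simp only [Rtup_take_swap n i h1 h2 B U hiB hi1B hU k c]

end Statement18Aux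

/-- Let `M` be a multiline queue, `1 ≤ i ≤ n−1` with
`e_i^←(M) ≠ M`, and let `r` be the row of the moved ball.  Then the labelling of
`e_i^←(M)` agrees with `L_M` above row `r`, and its row `r` is obtained from row
`r` of `L_M` by exchanging the entries in columns `i` and `i+1`, all other entries
unchanged. -/
theorem statement18 (n : ℕ) (hn : 1 ≤ n) (lam : List ℕ) (hlam : IsPartitionL lam)
    (hlen : lam.length < n) (M : List (Finset ℕ)) (hM : IsMLQ n lam M)
    (i : ℕ) (hi1 : 1 ≤ i) (hi2 : i < n)
    (hne : eCol n i M ≠ M) (r : ℕ) (hr : movedRowE n i M = some r) :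
    (∀ s c : ℕ, r < s → labelAt n (eCol n i M) s c = labelAt n M s c) ∧
    labelAt n (eCol n i M) r i = labelAt n M r (i + 1) ∧
    labelAt n (eCol n i M) r (i + 1) = labelAt n M r i ∧
    (∀ c : ℕ, c ≠ i → c ≠ i + 1 → labelAt n (eCol n i M) r c = labelAt n M r c) := by
  obtain ⟨rr, hlast, hrrr⟩ : ∃ rr, (colScan n i M).1.getLast? = some rr ∧ r = rr + 1 := by
    unfold movedRowE at hr
    cases h : (colScan n i M).1.getLast? with
    | none => rw [h] at hr; simp at hr
    | some rr =>
      rw [h] at hr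
      simp only [Option.map_some, Option.some.injEq] at hr
      exact ⟨rr, rfl, hr.symm⟩
  have hlast' : (auxCS i M).1.getLast? = some rr := by
    rw [← colScan_eq_auxCS n i M]; exact hlast
  obtain ⟨hrrlen, hi1B, hiB, hUstk⟩ := auxCS_getLast i M rr hlast'
  set B : Finset ℕ := M.getD rr ∅ with hB
  set B' : Finset ℕ := insert i (B.erase (i + 1)) with hB'
  set U : List (Finset ℕ) := M.drop (rr + 1) with hU
  have hecol : eCol n i M = M.set rr B' := by
    unfold eCol; rw [hlast]
  have hdropB' : (M.set rr B').drop (r - 1) = B' :: U := by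
    rw [hrrr, Nat.add_sub_cancel]
    exact drop_set_self M rr B' hrrlen
  have hdropB : M.drop (r - 1) = B :: U := by
    rw [hrrr, Nat.add_sub_cancel, List.drop_eq_getElem_cons hrrlen]
    congr 1
    rw [hB]
    exact (List.getD_eq_getElem M ∅ hrrlen).symm
  have hbl : ∀ c, botLabel n (B' :: U) c = botLabel n (B :: U) (swf i c) :=
    botLabel_swap n i hi1 hi2 B U hiB hi1B hUstk
  refine ⟨?_, ?_, ?_, ?_⟩
  · intro s c hs
    rw [hecol]
    unfold labelAt
    rw [drop_set_of_lt M rr (s - 1) B' (by omega)]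
  · rw [hecol]
    unfold labelAt
    rw [hdropB', hdropB, hbl i, swf_i]
  · rw [hecol]
    unfold labelAt
    rw [hdropB', hdropB, hbl (i + 1), swf_i1]
  · intro c hc1 hc2
    rw [hecol]
    unfold labelAt
    rw [hdropB', hdropB, hbl c, swf_other i c hc1 hc2]

end MultilineQueue
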